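/- arXiv:2303.05314 — 3 statements merged into one kernel-verified Lean document; each statement's English description precedes it below -/
import Mathlib

section
/- Let ℓ ≥ 2 be an integer with ℓ ≡ 1 (mod 3) and let p ≥ 5 be a prime. Then for every positive integer m, ℓ(3ℓ+1) ≠ p·m² + m·(p−2) and ℓ(3ℓ+1) ≠ p·m² − m·(p−2). -/
/-!
Reduce modulo 3. Since `ℓ ≡ 1`, the left side is `≡ 1 · 4 ≡ 1`, while for `p ≢ 0 (mod 3)`
the quadratic `p m² ± m (p - 2)` never takes the value `1` modulo 3.
-/

theorem ZMod.three_mul_sq_add_mul_sub_two_ne_one {a : ZMod 3} (ha : a ≠ 0) (b : ZMod 3) :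
    a * b ^ 2 + b * (a - 2) ≠ 1 ∧ a * b ^ 2 - b * (a - 2) ≠ 1 := by
  revert a b
  decide

theorem Nat.Prime.cast_zmod_three_ne_zero {p : ℕ} (hp : p.Prime) (hp3 : p ≠ 3) :
    ((p : ℤ) : ZMod 3) ≠ 0 := by
  rw [Int.cast_natCast, Ne, ZMod.natCast_eq_zero_iff]
  exact fun h => hp3 ((Nat.prime_dvd_prime_iff_eq Nat.prime_three hp).mp h).symm

theorem ZMod.intCast_mul_three_mul_add_one {ℓ : ℤ} (hℓ : ℓ % 3 = 1) :
    ((ℓ * (3 * ℓ + 1) : ℤ) : ZMod 3) = 1 := by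
  have h1 : (ℓ : ZMod 3) = 1 := by rw [← ZMod.intCast_mod, Nat.cast_ofNat, hℓ, Int.cast_one]
  push_cast
  rw [h1]
  decide

theorem stmt_0_general (ℓ : ℤ) (hℓmod : ℓ % 3 = 1)
    (p : ℕ) (hp : p.Prime) (hp5 : 5 ≤ p) (m : ℤ) :
    ℓ * (3 * ℓ + 1) ≠ (p : ℤ) * m ^ 2 + m * ((p : ℤ) - 2) ∧
    ℓ * (3 * ℓ + 1) ≠ (p : ℤ) * m ^ 2 - m * ((p : ℤ) - 2) := by
  have hlhs := ZMod.intCast_mul_three_mul_add_one hℓmod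
  obtain ⟨hplus, hminus⟩ :=
    ZMod.three_mul_sq_add_mul_sub_two_ne_one (hp.cast_zmod_three_ne_zero (by omega)) (m : ZMod 3)
  constructor <;> intro h <;> rw [h] at hlhs <;> push_cast at hlhs
  · exact hplus hlhs
  · exact hminus hlhs

theorem stmt_0 (ℓ : ℤ) (hℓ : 2 ≤ ℓ) (hℓmod : ℓ % 3 = 1)
    (p : ℕ) (hp : p.Prime) (hp5 : 5 ≤ p) (m : ℤ) (hm : 0 < m) :
    ℓ * (3 * ℓ + 1) ≠ (p : ℤ) * m ^ 2 + m * ((p : ℤ) - 2) ∧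
    ℓ * (3 * ℓ + 1) ≠ (p : ℤ) * m ^ 2 - m * ((p : ℤ) - 2) :=
  stmt_0_general ℓ hℓmod p hp hp5 m
end

section
/- For every prime p ≥ 5, the set of positive integers n for which C̄_{p,1}(n) is odd is infinite. -/
/-!
Modulo 2, `C̄_{p,1}(n) = ∑_λ 2 ^ #{distinct parts of λ that are ≡ ±1}` only counts the partitions
of `n` into parts from `A = {j : j ≢ 0, ±1 (mod p)}`; call their number `b(n)`. Writing
`σ_A(m)` for the sum of the divisors of `m` lying in `A`, the combinatorial form of the
logarithmic derivative of `∏_{j ∈ A} (1 - qʲ)⁻¹` is `n b(n) = ∑_{i + j = n} σ_A(i) b(j)`.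
If `b(n)` were even for all large `n`, this would make `σ_A` modulo 2 a linear recurrence of
finite order, hence eventually periodic, say with period `T`. It is not: for primes `q ≡ 2`
(mod `p`, by Dirichlet) and `ℓ ≡ 1` (mod `pT`), `σ_A(q) = q` is odd while `σ_A(qℓ) = q(1 + ℓ)`
is even, although `qℓ ≡ q` (mod `T`).
-/

/-- Andrews' singular overpartition function `C̄_{k,i}(n)`: the number of pairs `(λ, S)`
where `λ` is a partition of `n` with no part divisible by `k` and `S` is a set of
part-values of `λ`, each congruent to `i` or `-i` modulo `k`. -/
noncomputable def singularOverpartition (k i n : ℕ) : ℕ :=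
  Nat.card {P : n.Partition × Finset ℕ //
    (∀ j ∈ P.1.parts, ¬ k ∣ j) ∧
    P.2 ⊆ P.1.parts.toFinset ∧
    ∀ x ∈ P.2, (x : ZMod k) = (i : ZMod k) ∨ (x : ZMod k) = -(i : ZMod k)}

open Finset Nat.Partition

theorem Finset.odd_sum_two_pow_iff {ι : Type*} (s : Finset ι) (g : ι → ℕ) :
    Odd (∑ x ∈ s, 2 ^ g x) ↔ Odd #{x ∈ s | g x = 0} := by
  simp only [← ZMod.natCast_eq_one_iff_odd, Nat.cast_sum, Nat.cast_pow, Nat.cast_ofNat,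
    show (2 : ZMod 2) = 0 from rfl, zero_pow_eq, card_filter, Nat.cast_ite, Nat.cast_one,
    Nat.cast_zero]

theorem singularOverpartition_eq_sum (k i n : ℕ) :
    singularOverpartition k i n = ∑ L ∈ restricted n (¬ k ∣ ·),
      2 ^ #{x ∈ L.parts.toFinset | ((x : ℕ) : ZMod k) = i ∨ (x : ZMod k) = -i} := by
  simp only [← card_powerset, ← card_sigma]
  rw [singularOverpartition, ← Nat.card_eq_finsetCard]
  refine Nat.card_congr ((Equiv.sigmaEquivProd _ _).symm.subtypeEquiv fun P => ?_)
  simp [restricted, subset_iff, forall_and]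

def AvoidsZeroPmOne (p j : ℕ) : Prop := (j : ZMod p) ≠ 0 ∧ (j : ZMod p) ≠ 1 ∧ (j : ZMod p) ≠ -1

instance (p : ℕ) : DecidablePred (AvoidsZeroPmOne p) :=
  fun _ => inferInstanceAs (Decidable (_ ∧ _))

theorem odd_singularOverpartition_one_iff (k n : ℕ) :
    Odd (singularOverpartition k 1 n) ↔ Odd #(restricted n (AvoidsZeroPmOne k)) := by
  rw [singularOverpartition_eq_sum, odd_sum_two_pow_iff, restricted, restricted, filter_filter]
  congr! 3 with L
  simp [AvoidsZeroPmOne, ZMod.natCast_eq_zero_iff, filter_eq_empty_iff, ← forall_and]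

def restrictedDivisorSum (P : ℕ → Prop) [DecidablePred P] (m : ℕ) : ℕ :=
  ∑ d ∈ m.divisors with P d, d

theorem Nat.sum_antidiagonal_sum_divisors {M : Type*} [AddCommMonoid M] (n : ℕ)
    (f : ℕ → ℕ → M) :
    ∑ x ∈ antidiagonal n, ∑ d ∈ x.1.divisors, f d x.2 =
      ∑ a ∈ Icc 1 n, ∑ k ∈ Icc 1 (n / a), f a (n - a * k) := by
  rw [sum_sigma', sum_sigma']
  refine sum_bij' (fun xd _ => ⟨xd.2, xd.1.1 / xd.2⟩)
    (fun ak _ => ⟨(ak.1 * ak.2, n - ak.1 * ak.2), ak.1⟩) ?_ ?_ ?_ ?_ ?_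
  · rintro ⟨⟨i, j⟩, d⟩ hxd
    simp only [mem_sigma, HasAntidiagonal.mem_antidiagonal, Nat.mem_divisors] at hxd
    obtain ⟨hij, ⟨c, rfl⟩, hdc⟩ := hxd
    have hd : 0 < d := Nat.pos_of_ne_zero (left_ne_zero_of_mul hdc)
    have hc : 0 < c := Nat.pos_of_ne_zero (right_ne_zero_of_mul hdc)
    simp only [mem_sigma, mem_Icc]
    rw [Nat.mul_div_cancel_left c hd, Nat.le_div_iff_mul_le hd]
    exact ⟨⟨hd, by nlinarith⟩, hc, by nlinarith⟩
  · rintro ⟨a, k⟩ hak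
    simp only [mem_sigma, mem_Icc] at hak
    obtain ⟨⟨ha, -⟩, hk, hkn⟩ := hak
    rw [Nat.le_div_iff_mul_le ha] at hkn
    simp only [mem_sigma, HasAntidiagonal.mem_antidiagonal, Nat.mem_divisors]
    exact ⟨by rw [mul_comm]; omega, dvd_mul_right a k, by positivity⟩
  · rintro ⟨⟨i, j⟩, d⟩ hxd
    simp only [mem_sigma, HasAntidiagonal.mem_antidiagonal, Nat.mem_divisors] at hxd
    dsimp only
    rw [Nat.mul_div_cancel' hxd.2.1, show n - i = j by omega]
  · rintro ⟨a, k⟩ hak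
    simp only [mem_sigma, mem_Icc] at hak
    dsimp only
    rw [Nat.mul_div_cancel_left k hak.1.1]
  · rintro ⟨⟨i, j⟩, d⟩ hxd
    simp only [mem_sigma, HasAntidiagonal.mem_antidiagonal, Nat.mem_divisors] at hxd
    dsimp only
    rw [Nat.mul_div_cancel' hxd.2.1, show n - i = j by omega]

variable {P : ℕ → Prop} [DecidablePred P]

namespace Nat.Partition

theorem mem_Icc_of_mem_parts {n a : ℕ} {L : n.Partition} (ha : a ∈ L.parts) : a ∈ Icc 1 n :=
  mem_Icc.2 ⟨L.parts_pos ha, L.le_of_mem_parts ha⟩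

theorem sum_count_mul_eq {n : ℕ} (L : n.Partition) : ∑ a ∈ Icc 1 n, L.parts.count a * a = n := by
  have hsub : L.parts.toFinset ⊆ Icc 1 n := fun _ ha =>
    mem_Icc_of_mem_parts (Multiset.mem_toFinset.1 ha)
  conv_rhs => rw [← L.parts_sum, sum_multiset_count_of_subset _ _ hsub]
  simp only [smul_eq_mul]

theorem count_mul_le {n : ℕ} (L : n.Partition) (a : ℕ) : L.parts.count a * a ≤ n := by
  by_cases ha : a ∈ L.parts
  · conv_rhs => rw [← L.sum_count_mul_eq]
    exact single_le_sum (f := fun a => L.parts.count a * a) (fun _ _ => Nat.zero_le _)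
      (mem_Icc_of_mem_parts ha)
  · simp [Multiset.count_eq_zero_of_notMem ha]

theorem card_restricted_filter_le_count {n a k : ℕ} (ha : P a) (ha0 : 0 < a)
    (hak : a * k ≤ n) :
    #{L ∈ restricted n P | k ≤ L.parts.count a} = #(restricted (n - a * k) P) := by
  have hle {L : n.Partition} (hL : L ∈ {L ∈ restricted n P | k ≤ L.parts.count a}) :
      Multiset.replicate k a ≤ L.parts :=
    Multiset.le_count_iff_replicate_le.1 (mem_filter.1 hL).2
  refine card_bij'
    (fun L hL => ⟨L.parts - .replicate k a,
      fun hi => L.parts_pos (Multiset.mem_of_le (Multiset.sub_le_self _ _) hi), by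
        have := congrArg Multiset.sum (tsub_add_cancel_of_le (hle hL))
        rw [Multiset.sum_add, Multiset.sum_replicate, smul_eq_mul, L.parts_sum] at this
        rw [mul_comm]; omega⟩)
    (fun M _ => ⟨M.parts + .replicate k a,
      fun hi => (Multiset.mem_add.1 hi).elim M.parts_pos
        fun h => (Multiset.eq_of_mem_replicate h).symm ▸ ha0, by
        rw [Multiset.sum_add, Multiset.sum_replicate, smul_eq_mul, M.parts_sum, mul_comm k a]
        omega⟩)
    ?_ ?_ ?_ ?_
  · intro L hL
    simp only [restricted, mem_filter, mem_univ, true_and] at hL ⊢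
    exact fun i hi => hL.1 i (Multiset.mem_of_le (Multiset.sub_le_self _ _) hi)
  · intro M hM
    simp only [restricted, mem_filter, mem_univ, true_and] at hM ⊢
    refine ⟨fun i hi => (Multiset.mem_add.1 hi).elim (hM i)
      fun h => (Multiset.eq_of_mem_replicate h).symm ▸ ha, ?_⟩
    simp
  · intro L hL
    exact Nat.Partition.ext (tsub_add_cancel_of_le (hle hL))
  · intro M _
    exact Nat.Partition.ext (add_tsub_cancel_right _ _)

theorem sum_count_restricted {n a : ℕ} (ha : P a) (ha0 : 0 < a) :
    ∑ L ∈ restricted n P, L.parts.count a = ∑ k ∈ Icc 1 (n / a), #(restricted (n - a * k) P) :=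
  calc ∑ L ∈ restricted n P, L.parts.count a
      = ∑ L ∈ restricted n P, #{k ∈ Icc 1 (n / a) | k ≤ L.parts.count a} := by
        refine sum_congr rfl fun L _ => ?_
        have := (Nat.le_div_iff_mul_le ha0).2 (L.count_mul_le a)
        symm
        convert Nat.card_Icc 1 (L.parts.count a) using 2
        · ext k
          simp only [mem_filter, mem_Icc]
          omega
        · omega
    _ = ∑ k ∈ Icc 1 (n / a), #{L ∈ restricted n P | k ≤ L.parts.count a} := by
        simp only [card_filter]
        exact sum_comm
    _ = _ := sum_congr rfl fun k hk => card_restricted_filter_le_count ha ha0 <| by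
        rw [mul_comm, ← Nat.le_div_iff_mul_le ha0]; exact (mem_Icc.1 hk).2

theorem mul_card_restricted (n : ℕ) :
    n * #(restricted n P) =
      ∑ x ∈ antidiagonal n, restrictedDivisorSum P x.1 * #(restricted x.2 P) := by
  calc n * #(restricted n P)
      = ∑ a ∈ Icc 1 n, (∑ L ∈ restricted n P, L.parts.count a) * a := by
        simp only [sum_mul, mul_comm n, card_eq_sum_ones, one_mul]
        rw [sum_comm]
        exact sum_congr rfl fun L _ => L.sum_count_mul_eq.symm
    _ = ∑ a ∈ Icc 1 n, ∑ k ∈ Icc 1 (n / a),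
          if P a then a * #(restricted (n - a * k) P) else 0 := by
        refine sum_congr rfl fun a ha => ?_
        by_cases hPa : P a
        · simp only [hPa, if_true]
          rw [sum_count_restricted hPa (mem_Icc.1 ha).1, sum_mul]
          exact sum_congr rfl fun _ _ => mul_comm _ _
        · simp only [hPa, if_false, sum_const_zero]
          refine mul_eq_zero_of_left (sum_eq_zero fun L hL => Multiset.count_eq_zero.2 ?_) a
          exact fun h => hPa ((mem_filter.1 hL).2 a h)
    _ = _ := by
        rw [← Nat.sum_antidiagonal_sum_divisors n
          fun d j => if P d then d * #(restricted j P) else 0]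
        simp only [restrictedDivisorSum, sum_mul, sum_filter, ite_mul, zero_mul]

theorem card_restricted_zero : #(restricted 0 P) = 1 := by
  simp [restricted]

end Nat.Partition

theorem exists_periodic_shift_of_recurrence {α : Type*} [Finite α] {N N₀ : ℕ}
    (f : (Fin N → α) → α) {r : ℕ → α} (hr : ∀ n ≥ N₀, r n = f fun i => r (n - (i + 1))) :
    ∃ M T, 0 < T ∧ Function.Periodic (fun m => r (M + m)) T := by
  obtain ⟨a, b, hab, hw⟩ :=
    Finite.exists_ne_map_eq_of_infinite fun a : ℕ => fun i : Fin N => r (N₀ + a + i)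
  wlog hlt : a < b generalizing a b
  · exact this b a hab.symm hw.symm (by omega)
  refine ⟨N₀ + a, b - a, by omega, fun d => ?_⟩
  induction d using Nat.strong_induction_on with
  | _ d ih =>
    dsimp only at ih ⊢
    rcases lt_or_ge d N with hd | hd
    · have := congrFun hw ⟨d, hd⟩
      dsimp only at this
      rw [this]; congr 1; omega
    · rw [hr _ (by omega), hr _ (by omega)]
      congr 1
      funext i
      have := ih (d - (i + 1)) (by omega)
      convert this using 2 <;> omega

theorem cast_restrictedDivisorSum_eq_sum_of_even {N n : ℕ}
    (heven : ∀ m > N, Even #(restricted m P)) (hn : N < n) :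
    (restrictedDivisorSum P n : ZMod 2) =
      ∑ i : Fin N, (#(restricted (i + 1) P) : ZMod 2) * restrictedDivisorSum P (n - (i + 1)) := by
  have h := congrArg (Nat.cast : ℕ → ZMod 2) (mul_card_restricted (P := P) n)
  rw [Nat.cast_mul, (heven n hn).natCast_zmod_two, mul_zero, Nat.cast_sum,
    ← Nat.sum_antidiagonal_swap] at h
  simp only [Prod.fst_swap, Prod.snd_swap] at h
  rw [Nat.sum_antidiagonal_eq_sum_range_succ
      (fun j i => ((restrictedDivisorSum P i * #(restricted j P) : ℕ) : ZMod 2)),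
    ← sum_subset (range_subset_range.2 (Nat.succ_le_succ hn.le)), sum_range_succ', sum_range] at h
  · simp only [card_restricted_zero, Nat.sub_zero, Nat.cast_mul, mul_one] at h
    rw [eq_comm, CharTwo.add_eq_zero] at h
    rw [← h]
    exact sum_congr rfl fun i _ => mul_comm _ _
  · intro j _ hj
    rw [mem_range, not_lt] at hj
    rw [Nat.cast_mul, (heven j hj).natCast_zmod_two, mul_zero]

theorem restrictedDivisorSum_prime {q : ℕ} (hq : q.Prime) (h1 : ¬ P 1) (hPq : P q) :
    restrictedDivisorSum P q = q := by
  rw [restrictedDivisorSum, hq.divisors, filter_insert, if_neg h1, filter_singleton, if_pos hPq,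
    sum_singleton]

theorem restrictedDivisorSum_mul_prime {m ℓ : ℕ} (hℓ : ℓ.Prime) (hm : ¬ ℓ ∣ m)
    (hP : ∀ d, P (d * ℓ) ↔ P d) :
    restrictedDivisorSum P (m * ℓ) = restrictedDivisorSum P m * (1 + ℓ) := by
  have hcop : m.Coprime ℓ := Nat.coprime_comm.1 ((Nat.Prime.coprime_iff_not_dvd hℓ).2 hm)
  rw [restrictedDivisorSum, restrictedDivisorSum, sum_filter, sum_filter, Nat.divisors_mul,
    mul_def, sum_image hcop.mul_injOn_divisors, sum_product, sum_mul]
  refine sum_congr rfl fun a _ => ?_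
  rw [hℓ.divisors, sum_pair hℓ.one_lt.ne]
  simp only [mul_one, hP]
  split_ifs <;> ring

theorem avoidsZeroPmOne_of_eq_two {p q : ℕ} (hp5 : 5 ≤ p) (hq : (q : ZMod p) = 2) :
    AvoidsZeroPmOne p q := by
  have hne (m : ℕ) (hm0 : 0 < m) (hmp : m < p) : (m : ZMod p) ≠ 0 := fun h =>
    absurd (Nat.le_of_dvd hm0 ((ZMod.natCast_eq_zero_iff m p).1 h)) (by omega)
  refine ⟨?_, ?_, ?_⟩ <;> rw [hq] <;> intro h
  · exact hne 2 (by norm_num) (by omega) (by exact_mod_cast h)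
  · exact hne 1 (by norm_num) (by omega) (by push_cast; linear_combination h)
  · exact hne 3 (by norm_num) (by omega) (by push_cast; linear_combination h)

theorem not_periodic_restrictedDivisorSum {p : ℕ} (hp : p.Prime) (hp5 : 5 ≤ p) (M : ℕ) {T : ℕ}
    (hT : 0 < T) :
    ¬ Function.Periodic (fun m => (restrictedDivisorSum (AvoidsZeroPmOne p) (M + m) : ZMod 2))
      T := by
  intro hper
  have : NeZero p := ⟨hp.ne_zero⟩
  have h2 : IsUnit (2 : ZMod p) := by
    simpa using
      (ZMod.isUnit_iff_coprime 2 p).2 ((Nat.coprime_primes Nat.prime_two hp).2 (by omega))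
  obtain ⟨q, hqM, hq, hq2⟩ := Nat.forall_exists_prime_gt_and_eq_mod h2 (M + 2)
  obtain ⟨ℓ, hℓ, hqℓ, hℓ1⟩ := Nat.exists_prime_gt_modEq_one (k := p * T) q (by positivity)
  have hℓp : (ℓ : ZMod p) = 1 := by
    simpa using (ZMod.natCast_eq_natCast_iff _ _ _).2 (hℓ1.of_mul_right T)
  have hσq : restrictedDivisorSum (AvoidsZeroPmOne p) q = q :=
    restrictedDivisorSum_prime hq (by simp [AvoidsZeroPmOne]) (avoidsZeroPmOne_of_eq_two hp5 hq2)
  have hσqℓ : restrictedDivisorSum (AvoidsZeroPmOne p) (q * ℓ) = q * (1 + ℓ) := by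
    rw [restrictedDivisorSum_mul_prime hℓ (fun h => by have := Nat.le_of_dvd hq.pos h; omega)
      (fun d => by simp [AvoidsZeroPmOne, hℓp]), hσq]
  obtain ⟨c, hc⟩ := (Nat.modEq_iff_dvd' hℓ.one_le).1 (hℓ1.of_mul_left p).symm
  have hqℓ_eq : M + (q - M + q * c * T) = q * ℓ := by
    rw [show ℓ = T * c + 1 by omega]
    calc M + (q - M + q * c * T) = q + q * c * T := by omega
      _ = q * (T * c + 1) := by ring
  have := hper.nat_mul (q * c) (q - M)
  simp only [Nat.cast_id, hqℓ_eq, show M + (q - M) = q by omega, hσqℓ, hσq] at this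
  rw [(hq.odd_of_ne_two (by omega)).natCast_zmod_two,
    ((odd_one.add_odd (hℓ.odd_of_ne_two (by omega))).mul_left q).natCast_zmod_two] at this
  exact zero_ne_one this

theorem stmt_4 (p : ℕ) (hp : p.Prime) (hp5 : 5 ≤ p) :
    {n : ℕ | 0 < n ∧ Odd (singularOverpartition p 1 n)}.Infinite := by
  intro hfin
  obtain ⟨N, hN⟩ := hfin.bddAbove
  have heven : ∀ m > N, Even #(restricted m (AvoidsZeroPmOne p)) := fun m hm => by
    rw [← Nat.not_odd_iff_even, ← odd_singularOverpartition_one_iff]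
    exact fun hodd => absurd (hN ⟨by omega, hodd⟩) (by omega)
  obtain ⟨M, T, hT, hper⟩ := exists_periodic_shift_of_recurrence (N₀ := N + 1)
    (r := fun n => (restrictedDivisorSum (AvoidsZeroPmOne p) n : ZMod 2))
    (fun w => ∑ i : Fin N, (#(restricted (i + 1) (AvoidsZeroPmOne p)) : ZMod 2) * w i)
    (fun n hn => cast_restrictedDivisorSum_eq_sum_of_even heven hn)
  exact not_periodic_restrictedDivisorSum hp hp5 M hT hper
end

section
/- For every nonnegative integer N, the coefficient of q^N in the formal power series ∏_{n=1}^{∞} (1 − q^n) (equivalently, in the truncated product ∏_{n=1}^{N} (1 − q^n)) is an odd integer if and only if there exists a nonnegative integer m with N = m(3m−1)/2 or N = m(3m+1)/2; otherwise the coefficient is even. -/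
open PowerSeries Finset

lemma key1 (N : ℕ) :
    PowerSeries.coeff N (∏ n ∈ Finset.Icc 1 N, (1 - (PowerSeries.X : PowerSeries ℤ) ^ n)) =
      ∑ t ∈ (Finset.Icc 1 N).powerset.filter (fun t => (∑ i ∈ t, i) = N), (-1 : ℤ) ^ t.card := by
  have h1 : ∀ n, (1 - (PowerSeries.X : PowerSeries ℤ) ^ n) = (-(X:PowerSeries ℤ) ^ n) + 1 := by
    intro n; ring
  simp_rw [h1]
  rw [Finset.prod_add]
  simp_rw [Finset.prod_const_one, mul_one]
  have h2 : ∀ t : Finset ℕ, (∏ i ∈ t, (-(X:PowerSeries ℤ) ^ i)) =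
      (PowerSeries.C ((-1 : ℤ)^t.card)) * X ^ (∑ i ∈ t, i) := by
    intro t
    have : ∀ i : ℕ, (-(X:PowerSeries ℤ) ^ i) = (PowerSeries.C (-1 : ℤ)) * X ^ i := by
      intro i; simp
    simp_rw [this]
    rw [Finset.prod_mul_distrib, Finset.prod_const, Finset.prod_pow_eq_pow_sum, ← map_pow]
  simp_rw [h2, map_sum, PowerSeries.coeff_C_mul, PowerSeries.coeff_X_pow]
  rw [Finset.sum_filter]
  congr 1; ext t
  by_cases h : (∑ i ∈ t, i) = N
  · simp [h]
  · simp [h]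
    intro hh; exact absurd hh.symm h


open Finset

/-- length of the maximal "staircase" `{M-l+1, ..., M}` contained in `S`. -/
def stair (S : Finset ℕ) (M : ℕ) : ℕ := Nat.findGreatest (fun k => Finset.Ioc (M - k) M ⊆ S) M

/-- Franklin's involution. -/
def phi (S : Finset ℕ) : Finset ℕ :=
  if h : S.Nonempty then
    if S.min' h ≤ stair S (S.max' h)
    then insert (S.max' h + 1) ((S.erase (S.min' h)).erase (S.max' h + 1 - S.min' h))
    else insert (stair S (S.max' h))
      (insert (S.max' h - stair S (S.max' h)) (S.erase (S.max' h)))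
  else ∅

/-- exceptional (pentagonal) partitions -/
def Exc (S : Finset ℕ) : Prop :=
  ∃ m : ℕ, 1 ≤ m ∧ (S = Finset.Icc m (2*m - 1) ∨ S = Finset.Icc (m+1) (2*m))

section stairlemmas

variable {S : Finset ℕ} {M : ℕ}

lemma stair_subset (hM : M ∈ S) : Finset.Ioc (M - stair S M) M ⊆ S := by
  have h0 : Finset.Ioc (M - 0) M ⊆ S := by simp
  exact Nat.findGreatest_spec (P := fun k => Finset.Ioc (M - k) M ⊆ S) (Nat.zero_le M) h0

lemma stair_le : stair S M ≤ M := Nat.findGreatest_le M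

lemma one_le_stair (hM : M ∈ S) (h1 : 1 ≤ M) : 1 ≤ stair S M := by
  apply Nat.le_findGreatest h1
  intro x hx
  simp only [Finset.mem_Ioc] at hx
  have : x = M := by omega
  rwa [this]

lemma le_stair {k : ℕ} (hk : k ≤ M) (h : Finset.Ioc (M - k) M ⊆ S) : k ≤ stair S M :=
  Nat.le_findGreatest hk h

lemma stair_not_mem (hM : M ∈ S) (hlt : stair S M < M) : M - stair S M ∉ S := by
  intro hmem
  have hsub := stair_subset hM
  have h : Finset.Ioc (M - (stair S M + 1)) M ⊆ S := by
    intro x hx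
    simp only [Finset.mem_Ioc] at hx
    rcases Nat.lt_or_ge (M - stair S M) x with h' | h'
    · exact hsub (by simp only [Finset.mem_Ioc]; omega)
    · have : x = M - stair S M := by omega
      rwa [this]
  unfold stair at hlt
  exact Nat.findGreatest_is_greatest
    (P := fun k => Finset.Ioc (M - k) M ⊆ S) (Nat.lt_succ_self _) (by omega) h

lemma stair_eq {k : ℕ} (hk1 : 1 ≤ k) (hk : k ≤ M) (hsub : Finset.Ioc (M - k) M ⊆ S)
    (hnot : M - k ∉ S) : stair S M = k := by
  have h1 : k ≤ stair S M := le_stair hk hsub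
  have hle : stair S M ≤ M := stair_le
  have hMS : M ∈ S := hsub (by simp only [Finset.mem_Ioc]; omega)
  by_contra hne
  have h2 : k < stair S M := by omega
  have : M - k ∈ Finset.Ioc (M - stair S M) M := by
    simp only [Finset.mem_Ioc]; omega
  exact hnot (stair_subset hMS this)

end stairlemmas

lemma franklin {N : ℕ} (hN : 1 ≤ N) {S : Finset ℕ} (h1 : ∀ x ∈ S, 1 ≤ x)
    (hsum : ∑ i ∈ S, i = N) (hexc : ¬ Exc S) :
    (∀ x ∈ phi S, 1 ≤ x) ∧ (∑ i ∈ phi S, i = N) ∧ ¬ Exc (phi S) ∧ phi (phi S) = S ∧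
      ((-1 : ℤ) ^ (phi S).card = -(-1 : ℤ) ^ S.card) := by
  have hne : S.Nonempty := by
    rcases S.eq_empty_or_nonempty with h | h
    · rw [h] at hsum; simp at hsum; omega
    · exact h
  set M := S.max' hne with hM
  set s := S.min' hne with hs
  set l := stair S M with hl
  have hMS : M ∈ S := S.max'_mem hne
  have hsS : s ∈ S := S.min'_mem hne
  have hub : ∀ x ∈ S, x ≤ M := fun x hx => S.le_max' x hx
  have hlb : ∀ x ∈ S, s ≤ x := fun x hx => S.min'_le x hx
  have hsM : s ≤ M := hlb M hMS
  have h1M : 1 ≤ M := h1 M hMS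
  have h1s : 1 ≤ s := h1 s hsS
  have hl1 : 1 ≤ l := one_le_stair hMS h1M
  have hlM : l ≤ M := stair_le
  have hstair : Finset.Ioc (M - l) M ⊆ S := stair_subset hMS
  have hsl_ub : s ≤ M - l + 1 := hlb _ (hstair (by simp only [Finset.mem_Ioc]; omega))
  have hMN : M ≤ N := by
    rw [← hsum]; exact Finset.single_le_sum (fun i _ => Nat.zero_le i) hMS
  by_cases hc : s ≤ l
  · -- Case A
    have h2s : 2 * s ≤ M := by
      by_contra hcon
      have heq : 2 * s = M + 1 := by omega
      have hfull : Finset.Icc s M ⊆ S := by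
        intro x hx
        simp only [Finset.mem_Icc] at hx
        exact hstair (by simp only [Finset.mem_Ioc]; omega)
      have hSeq : S = Finset.Icc s M := by
        apply Finset.Subset.antisymm _ hfull
        intro x hx; simp only [Finset.mem_Icc]; exact ⟨hlb x hx, hub x hx⟩
      exact hexc ⟨s, h1s, Or.inl (by rw [hSeq]; congr 1; omega)⟩
    have hm1 : M + 1 - s ∈ S := hstair (by simp only [Finset.mem_Ioc]; omega)
    have hne1 : M + 1 - s ≠ s := by omega
    have hM1 : M + 1 ∉ S := fun h => by have := hub _ h; omega
    set T := (S.erase s).erase (M + 1 - s) with hT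
    have hmemT : ∀ x, x ∈ T ↔ x ∈ S ∧ x ≠ s ∧ x ≠ M + 1 - s := by
      intro x
      simp only [hT, Finset.mem_erase]
      tauto
    have hm1es : M + 1 - s ∈ S.erase s := Finset.mem_erase.2 ⟨hne1, hm1⟩
    have hM1T : M + 1 ∉ T := fun h => hM1 ((hmemT _).1 h).1
    have hphiS : phi S = insert (M + 1) T := by
      rw [phi, dif_pos hne, if_pos hc]
    set S' := insert (M + 1) T with hS'
    have e1 : (S.erase s).card + 1 = S.card := Finset.card_erase_add_one hsS
    have e2 : T.card + 1 = (S.erase s).card := Finset.card_erase_add_one hm1es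
    have e3 : S'.card = T.card + 1 := Finset.card_insert_of_notMem hM1T
    have hsign : (-1 : ℤ) ^ S'.card = -(-1 : ℤ) ^ S.card := by
      have : S.card = S'.card + 1 := by omega
      rw [this, pow_succ]; ring
    have f1 : (∑ x ∈ T, x) + (M + 1 - s) = ∑ x ∈ S.erase s, x :=
      Finset.sum_erase_add _ _ hm1es
    have f2 : (∑ x ∈ S.erase s, x) + s = ∑ x ∈ S, x := Finset.sum_erase_add _ _ hsS
    have hsum' : ∑ i ∈ S', i = N := by
      rw [hS', Finset.sum_insert hM1T]; omega
    have h1' : ∀ x ∈ S', 1 ≤ x := by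
      intro x hx
      rcases Finset.mem_insert.1 hx with h | h
      · omega
      · exact h1 x ((hmemT _).1 h).1
    have hne' : S'.Nonempty := ⟨M + 1, Finset.mem_insert_self _ _⟩
    have hub' : ∀ x ∈ S', x ≤ M + 1 := by
      intro x hx
      rcases Finset.mem_insert.1 hx with h | h
      · omega
      · exact le_trans (hub x ((hmemT _).1 h).1) (by omega)
    have hM'eq : S'.max' hne' = M + 1 :=
      le_antisymm (Finset.max'_le _ hne' _ hub') (Finset.le_max' _ _ (Finset.mem_insert_self _ _))
    have hge' : ∀ x ∈ S', s + 1 ≤ x := by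
      intro x hx
      rcases Finset.mem_insert.1 hx with h | h
      · omega
      · have h' := (hmemT _).1 h
        have := hlb x h'.1
        have := h'.2.1
        omega
    have hm2 : M + 2 - s ∈ S' := by
      by_cases hs1 : s = 1
      · simp only [hs1]
        have : M + 2 - 1 = M + 1 := by omega
        rw [this]; exact Finset.mem_insert_self _ _
      · apply Finset.mem_insert_of_mem
        rw [hmemT]
        refine ⟨hstair (by simp only [Finset.mem_Ioc]; omega), by omega, by omega⟩
    have hm1' : M + 1 - s ∉ S' := by
      intro hx
      rcases Finset.mem_insert.1 hx with h | h
      · omega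
      · exact (((hmemT _).1 h).2.2) rfl
    have hl'eq : stair S' (M + 1) = s := by
      apply stair_eq h1s (by omega)
      · intro x hx
        simp only [Finset.mem_Ioc] at hx
        rcases Nat.eq_or_lt_of_le hx.2 with h | h
        · rw [h]; exact Finset.mem_insert_self _ _
        · apply Finset.mem_insert_of_mem
          rw [hmemT]
          refine ⟨hstair (by simp only [Finset.mem_Ioc]; omega), by omega, by omega⟩
      · exact hm1'
    have hphi2 : phi S' = S := by
      rw [phi, dif_pos hne', hM'eq, hl'eq]
      have hcond : ¬ (S'.min' hne' ≤ s) := by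
        have hmm := hge' (S'.min' hne') (S'.min'_mem hne')
        omega
      rw [if_neg hcond]
      have g1 : S'.erase (M + 1) = T := Finset.erase_insert hM1T
      rw [g1]
      have g2 : insert (M + 1 - s) T = S.erase s := Finset.insert_erase hm1es
      rw [g2, Finset.insert_erase hsS]
    have hexc' : ¬ Exc S' := by
      rintro ⟨m, hm, hcase⟩
      have hb1 : M + 1 ∈ S' := Finset.mem_insert_self _ _
      rcases hcase with hSeq | hSeq
      · rw [hSeq] at hb1 hm2 hm1'
        simp only [Finset.mem_Icc] at hb1 hm2 hm1'
        have hb2 : (2 * m - 1 : ℕ) ≤ M + 1 := by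
          apply hub'
          rw [hSeq]
          simp only [Finset.mem_Icc]; omega
        omega
      · rw [hSeq] at hb1 hm2 hm1'
        simp only [Finset.mem_Icc] at hb1 hm2 hm1'
        have hb2 : (2 * m : ℕ) ≤ M + 1 := by
          apply hub'
          rw [hSeq]
          simp only [Finset.mem_Icc]; omega
        omega
    rw [hphiS]
    exact ⟨h1', hsum', hexc', hphi2, hsign⟩
  · -- Case B
    have hls : l + 1 ≤ s := by omega
    have h2l : 2 * l ≤ M := by omega
    have hlltM : l < M := by
      by_contra hcon
      have hleq : l = M := by omega
      have h1S : (1 : ℕ) ∈ S := by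
        apply hstair
        simp only [Finset.mem_Ioc]; omega
      have := hlb 1 h1S
      omega
    have hMne2l : M ≠ 2 * l := by
      intro heq
      have hseq : s = l + 1 := by omega
      have hfull : Finset.Icc (l + 1) (2 * l) ⊆ S := by
        intro x hx
        simp only [Finset.mem_Icc] at hx
        exact hstair (by simp only [Finset.mem_Ioc]; omega)
      have hSeq : S = Finset.Icc (l + 1) (2 * l) := by
        apply Finset.Subset.antisymm _ hfull
        intro x hx
        simp only [Finset.mem_Icc]
        have := hlb x hx; have := hub x hx; omega
      exact hexc ⟨l, hl1, Or.inr hSeq⟩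
    have h2l' : 2 * l < M := by omega
    have hnm : M - l ∉ S := stair_not_mem hMS hlltM
    have hlnS : l ∉ S := fun h => by have := hlb l h; omega
    have hnm1 : M - l ∉ S.erase M := fun h => hnm (Finset.mem_of_mem_erase h)
    have hln1 : l ∉ insert (M - l) (S.erase M) := by
      intro h
      rcases Finset.mem_insert.1 h with h | h
      · omega
      · exact hlnS (Finset.mem_of_mem_erase h)
    set S' := insert l (insert (M - l) (S.erase M)) with hS'
    have hphiS : phi S = S' := by
      rw [phi, dif_pos hne, if_neg hc]
    have e1 : (S.erase M).card + 1 = S.card := Finset.card_erase_add_one hMS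
    have e2 : S'.card = S.card + 1 := by
      rw [hS', Finset.card_insert_of_notMem hln1, Finset.card_insert_of_notMem hnm1]
      omega
    have hsign : (-1 : ℤ) ^ S'.card = -(-1 : ℤ) ^ S.card := by
      rw [e2, pow_succ]; ring
    have f2 : (∑ x ∈ S.erase M, x) + M = ∑ x ∈ S, x := Finset.sum_erase_add _ _ hMS
    have hsum' : ∑ i ∈ S', i = N := by
      rw [hS', Finset.sum_insert hln1, Finset.sum_insert hnm1]; omega
    have h1' : ∀ x ∈ S', 1 ≤ x := by
      intro x hx
      rcases Finset.mem_insert.1 hx with h | h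
      · omega
      · rcases Finset.mem_insert.1 h with h | h
        · omega
        · exact h1 x (Finset.mem_of_mem_erase h)
    have hne' : S'.Nonempty := ⟨l, Finset.mem_insert_self _ _⟩
    have hub' : ∀ x ∈ S', x ≤ M - 1 := by
      intro x hx
      rcases Finset.mem_insert.1 hx with h | h
      · omega
      · rcases Finset.mem_insert.1 h with h | h
        · omega
        · have h2 := hub x (Finset.mem_of_mem_erase h)
          have h3 := Finset.ne_of_mem_erase h
          omega
    have hlb' : ∀ x ∈ S', l ≤ x := by
      intro x hx
      rcases Finset.mem_insert.1 hx with h | h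
      · omega
      · rcases Finset.mem_insert.1 h with h | h
        · omega
        · have := hlb x (Finset.mem_of_mem_erase h); omega
    have hM1mem : M - 1 ∈ S' := by
      by_cases hl1' : l = 1
      · apply Finset.mem_insert_of_mem
        rw [show M - 1 = M - l by omega]
        exact Finset.mem_insert_self _ _
      · apply Finset.mem_insert_of_mem
        apply Finset.mem_insert_of_mem
        apply Finset.mem_erase.2
        refine ⟨by omega, hstair (by simp only [Finset.mem_Ioc]; omega)⟩
    have hM'eq : S'.max' hne' = M - 1 :=
      le_antisymm (Finset.max'_le _ hne' _ hub') (Finset.le_max' _ _ hM1mem)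
    have hmin'eq : S'.min' hne' = l :=
      le_antisymm (Finset.min'_le _ _ (Finset.mem_insert_self _ _)) (Finset.le_min' _ _ _ hlb')
    have hl'ge : l ≤ stair S' (M - 1) := by
      apply le_stair (by omega)
      intro x hx
      simp only [Finset.mem_Ioc] at hx
      by_cases hxl : x = M - l
      · rw [hxl]
        exact Finset.mem_insert_of_mem (Finset.mem_insert_self _ _)
      · apply Finset.mem_insert_of_mem
        apply Finset.mem_insert_of_mem
        apply Finset.mem_erase.2
        refine ⟨by omega, hstair (by simp only [Finset.mem_Ioc]; omega)⟩
    have hphi2 : phi S' = S := by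
      rw [phi, dif_pos hne', hM'eq, hmin'eq]
      rw [if_pos hl'ge]
      rw [show M - 1 + 1 = M by omega, show M - l = M - l from rfl]
      have g1 : S'.erase l = insert (M - l) (S.erase M) := Finset.erase_insert hln1
      rw [g1, Finset.erase_insert hnm1, Finset.insert_erase hMS]
    have hexc' : ¬ Exc S' := by
      rintro ⟨m, hm, hcase⟩
      have hb1 : l ∈ S' := Finset.mem_insert_self _ _
      rcases hcase with hSeq | hSeq
      · have hb2 : m ∈ S' := by
          rw [hSeq]; simp only [Finset.mem_Icc]; omega
        have hb3 := hlb' m hb2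
        rw [hSeq] at hb1 hM1mem
        simp only [Finset.mem_Icc] at hb1 hM1mem
        omega
      · have hb2 : m + 1 ∈ S' := by
          rw [hSeq]; simp only [Finset.mem_Icc]; omega
        have hb3 := hlb' (m + 1) hb2
        rw [hSeq] at hb1 hM1mem
        simp only [Finset.mem_Icc] at hb1 hM1mem
        omega
    rw [hphiS]
    exact ⟨h1', hsum', hexc', hphi2, hsign⟩

lemma two_mul_sum_Icc : ∀ (b a : ℕ), a ≤ b + 1 → (∑ i ∈ Finset.Icc a b, i) * 2 = (a + b) * (b + 1 - a) := by
  intro b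
  induction b with
  | zero =>
    intro a ha
    interval_cases a
    · simp
    · simp
  | succ b ih =>
    intro a ha
    by_cases h : a ≤ b + 1
    · have hins : Finset.Icc a (b + 1) = insert (b + 1) (Finset.Icc a b) := by
        rw [(Finset.insert_Icc_right_eq_Icc_add_one h).symm]
      rw [hins, Finset.sum_insert (by simp)]
      have H := ih a h
      zify [h, show a ≤ b + 2 by omega] at H ⊢
      linear_combination H
    · have : a = b + 2 := by omega
      subst this
      rw [Finset.Icc_eq_empty (by omega)]
      simp
lemma aux1 {a b : ℕ} (ha : 1 ≤ a) (hb : 1 ≤ b) (h : a * (3 * a - 1) = b * (3 * b - 1)) : a = b := by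
  zify [show 1 ≤ 3*a by omega, show 1 ≤ 3*b by omega] at h
  rcases lt_trichotomy a b with hlt | heq | hlt
  · exfalso
    have : (a : ℤ) < b := by exact_mod_cast hlt
    nlinarith
  · exact heq
  · exfalso
    have : (b : ℤ) < a := by exact_mod_cast hlt
    nlinarith

lemma aux2 {a b : ℕ} (ha : 1 ≤ a) (hb : 1 ≤ b) (h : a * (3 * a - 1) = b * (3 * b + 1)) : False := by
  zify [show 1 ≤ 3*a by omega] at h
  rcases lt_trichotomy a b with hlt | heq | hlt
  · have : (a : ℤ) < b := by exact_mod_cast hlt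
    have hb' : (1 : ℤ) ≤ b := by exact_mod_cast hb
    nlinarith
  · subst heq
    have ha' : (1 : ℤ) ≤ a := by exact_mod_cast ha
    nlinarith
  · have : (b : ℤ) < a := by exact_mod_cast hlt
    have ha' : (1 : ℤ) ≤ a := by exact_mod_cast ha
    have hb' : (1 : ℤ) ≤ b := by exact_mod_cast hb
    nlinarith

lemma aux3 {a b : ℕ} (ha : 1 ≤ a) (hb : 1 ≤ b) (h : a * (3 * a + 1) = b * (3 * b + 1)) : a = b := by
  rcases lt_trichotomy a b with hlt | heq | hlt
  · exfalso; nlinarith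
  · exact heq
  · exfalso; nlinarith

lemma sum_pent1 {m : ℕ} (hm : 1 ≤ m) : (∑ i ∈ Finset.Icc m (2*m-1), i) * 2 = m * (3 * m - 1) := by
  rw [two_mul_sum_Icc _ _ (by omega)]
  have h1 : 2*m-1+1-m = m := by omega
  have h2 : m + (2*m-1) = 3*m-1 := by omega
  rw [h1, h2, mul_comm]

lemma sum_pent2 {m : ℕ} (hm : 1 ≤ m) : (∑ i ∈ Finset.Icc (m+1) (2*m), i) * 2 = m * (3 * m + 1) := by
  rw [two_mul_sum_Icc _ _ (by omega)]
  have h1 : 2*m+1-(m+1) = m := by omega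
  have h2 : m+1 + 2*m = 3*m+1 := by omega
  rw [h1, h2, mul_comm]

lemma exc_sum_pent {S : Finset ℕ} {N : ℕ} (hE : Exc S) (hsum : ∑ i ∈ S, i = N) :
    ∃ m : ℕ, N = m * (3 * m - 1) / 2 ∨ N = m * (3 * m + 1) / 2 := by
  obtain ⟨m, hm, hcase⟩ := hE
  refine ⟨m, ?_⟩
  rcases hcase with h | h
  · left
    have h2 : N * 2 = m * (3 * m - 1) := by rw [← hsum, h]; exact sum_pent1 hm
    exact (Nat.div_eq_of_eq_mul_left (by norm_num) (by linarith)).symm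
  · right
    have h2 : N * 2 = m * (3 * m + 1) := by rw [← hsum, h]; exact sum_pent2 hm
    exact (Nat.div_eq_of_eq_mul_left (by norm_num) (by linarith)).symm

lemma exc_unique {S S' : Finset ℕ} {N : ℕ} (hE : Exc S) (hE' : Exc S')
    (hsum : ∑ i ∈ S, i = N) (hsum' : ∑ i ∈ S', i = N) : S = S' := by
  obtain ⟨m, hm, hcase⟩ := hE
  obtain ⟨m', hm', hcase'⟩ := hE'
  rcases hcase with h | h <;> rcases hcase' with h' | h'
  · have e1 : N * 2 = m * (3 * m - 1) := by rw [← hsum, h]; exact sum_pent1 hm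
    have e2 : N * 2 = m' * (3 * m' - 1) := by rw [← hsum', h']; exact sum_pent1 hm'
    have : m = m' := aux1 hm hm' (e1.symm.trans e2)
    rw [h, h', this]
  · have e1 : N * 2 = m * (3 * m - 1) := by rw [← hsum, h]; exact sum_pent1 hm
    have e2 : N * 2 = m' * (3 * m' + 1) := by rw [← hsum', h']; exact sum_pent2 hm'
    exact absurd (e1.symm.trans e2) (fun hh => aux2 hm hm' hh)
  · have e1 : N * 2 = m * (3 * m + 1) := by rw [← hsum, h]; exact sum_pent2 hm
    have e2 : N * 2 = m' * (3 * m' - 1) := by rw [← hsum', h']; exact sum_pent1 hm'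
    exact absurd (e2.symm.trans e1) (fun hh => aux2 hm' hm hh)
  · have e1 : N * 2 = m * (3 * m + 1) := by rw [← hsum, h]; exact sum_pent2 hm
    have e2 : N * 2 = m' * (3 * m' + 1) := by rw [← hsum', h']; exact sum_pent2 hm'
    have : m = m' := aux3 hm hm' (e1.symm.trans e2)
    rw [h, h', this]

lemma mem_D_iff {N : ℕ} {S : Finset ℕ} :
    S ∈ (Finset.Icc 1 N).powerset.filter (fun t => (∑ i ∈ t, i) = N) ↔
      (∀ x ∈ S, 1 ≤ x) ∧ (∑ i ∈ S, i = N) := by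
  simp only [Finset.mem_filter, Finset.mem_powerset]
  constructor
  · rintro ⟨hsub, hsum⟩
    exact ⟨fun x hx => (Finset.mem_Icc.1 (hsub hx)).1, hsum⟩
  · rintro ⟨h1, hsum⟩
    refine ⟨fun x hx => Finset.mem_Icc.2 ⟨h1 x hx, ?_⟩, hsum⟩
    rw [← hsum]
    exact Finset.single_le_sum (fun i _ => Nat.zero_le i) hx

lemma pent_exists {N m : ℕ} (hN : 1 ≤ N)
    (h : N = m * (3 * m - 1) / 2 ∨ N = m * (3 * m + 1) / 2) :
    ∃ S₀ : Finset ℕ, (∀ x ∈ S₀, 1 ≤ x) ∧ (∑ i ∈ S₀, i = N) ∧ Exc S₀ := by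
  have hm : 1 ≤ m := by
    by_contra hc
    have : m = 0 := by omega
    subst this
    simp at h
    omega
  rcases h with h | h
  · have hdvd : 2 ∣ m * (3 * m - 1) := by
      rcases Nat.even_or_odd m with he | ho
      · exact Dvd.dvd.mul_right he.two_dvd _
      · apply Dvd.dvd.mul_left _ m
        rw [Nat.odd_iff] at ho
        have : (3 * m - 1) % 2 = 0 := by omega
        omega
    have h2 : N * 2 = m * (3 * m - 1) := by
      rw [h]; exact Nat.div_mul_cancel hdvd
    refine ⟨Finset.Icc m (2*m-1), fun x hx => ?_, ?_, ⟨m, hm, Or.inl rfl⟩⟩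
    · have := (Finset.mem_Icc.1 hx).1; omega
    · have := sum_pent1 hm
      omega
  · have hdvd : 2 ∣ m * (3 * m + 1) := by
      rcases Nat.even_or_odd m with he | ho
      · exact Dvd.dvd.mul_right he.two_dvd _
      · apply Dvd.dvd.mul_left _ m
        rw [Nat.odd_iff] at ho
        have : (3 * m + 1) % 2 = 0 := by omega
        omega
    have h2 : N * 2 = m * (3 * m + 1) := by
      rw [h]; exact Nat.div_mul_cancel hdvd
    refine ⟨Finset.Icc (m+1) (2*m), fun x hx => ?_, ?_, ⟨m, hm, Or.inr rfl⟩⟩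
    · have := (Finset.mem_Icc.1 hx).1; omega
    · have := sum_pent2 hm
      omega

theorem stmt_16 (N : ℕ) :
    Odd (PowerSeries.coeff N (∏ n ∈ Finset.Icc 1 N, (1 - (PowerSeries.X : PowerSeries ℤ) ^ n))) ↔
      ∃ m : ℕ, N = m * (3 * m - 1) / 2 ∨ N = m * (3 * m + 1) / 2 := by
  rcases Nat.eq_zero_or_pos N with rfl | hN
  · constructor
    · intro _
      exact ⟨0, Or.inl rfl⟩
    · intro _
      rw [show Finset.Icc 1 0 = ∅ from Finset.Icc_eq_empty (by omega)]
      simp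
  · rw [key1]
    set D := (Finset.Icc 1 N).powerset.filter (fun t => (∑ i ∈ t, i) = N) with hD
    by_cases hp : ∃ m : ℕ, N = m * (3 * m - 1) / 2 ∨ N = m * (3 * m + 1) / 2
    · simp only [hp, iff_true]
      obtain ⟨m, hm⟩ := hp
      obtain ⟨S₀, hS1, hS2, hSE⟩ := pent_exists hN hm
      have hS₀D : S₀ ∈ D := mem_D_iff.2 ⟨hS1, hS2⟩
      rw [← Finset.add_sum_erase _ _ hS₀D]
      have hzero : ∑ x ∈ D.erase S₀, (-1 : ℤ) ^ x.card = 0 := by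
        apply Finset.sum_involution (fun S _ => phi S)
        · intro S hS
          obtain ⟨hSne, hSD⟩ := Finset.mem_erase.1 hS
          obtain ⟨h1', hsum'⟩ := mem_D_iff.1 hSD
          have hexc : ¬ Exc S := fun hE => hSne (exc_unique hE hSE hsum' hS2)
          obtain ⟨_, _, _, _, hsign⟩ := franklin hN h1' hsum' hexc
          rw [hsign]; ring
        · intro S hS hne heq
          obtain ⟨hSne, hSD⟩ := Finset.mem_erase.1 hS
          obtain ⟨h1', hsum'⟩ := mem_D_iff.1 hSD
          have hexc : ¬ Exc S := fun hE => hSne (exc_unique hE hSE hsum' hS2)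
          obtain ⟨_, _, _, _, hsign⟩ := franklin hN h1' hsum' hexc
          rw [heq] at hsign
          have hnz : ((-1 : ℤ)) ^ S.card ≠ 0 := pow_ne_zero _ (by norm_num)
          have : ((-1 : ℤ)) ^ S.card = 0 := by linarith
          exact hnz this
        · intro S hS
          obtain ⟨hSne, hSD⟩ := Finset.mem_erase.1 hS
          obtain ⟨h1', hsum'⟩ := mem_D_iff.1 hSD
          have hexc : ¬ Exc S := fun hE => hSne (exc_unique hE hSE hsum' hS2)
          obtain ⟨ha, hb, hc, _, _⟩ := franklin hN h1' hsum' hexc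
          refine Finset.mem_erase.2 ⟨fun hh => hc (hh ▸ hSE), mem_D_iff.2 ⟨ha, hb⟩⟩
        · intro S hS
          obtain ⟨hSne, hSD⟩ := Finset.mem_erase.1 hS
          obtain ⟨h1', hsum'⟩ := mem_D_iff.1 hSD
          have hexc : ¬ Exc S := fun hE => hSne (exc_unique hE hSE hsum' hS2)
          obtain ⟨_, _, _, hd, _⟩ := franklin hN h1' hsum' hexc
          exact hd
      rw [hzero, add_zero]
      rcases Nat.even_or_odd S₀.card with he | ho
      · rw [he.neg_one_pow]; exact ⟨0, by ring⟩
      · rw [ho.neg_one_pow]; exact ⟨-1, by ring⟩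
    · simp only [hp, iff_false]
      have hzero : ∑ x ∈ D, (-1 : ℤ) ^ x.card = 0 := by
        apply Finset.sum_involution (fun S _ => phi S)
        · intro S hS
          obtain ⟨h1', hsum'⟩ := mem_D_iff.1 hS
          have hexc : ¬ Exc S := fun hE => hp (exc_sum_pent hE hsum')
          obtain ⟨_, _, _, _, hsign⟩ := franklin hN h1' hsum' hexc
          rw [hsign]; ring
        · intro S hS hne heq
          obtain ⟨h1', hsum'⟩ := mem_D_iff.1 hS
          have hexc : ¬ Exc S := fun hE => hp (exc_sum_pent hE hsum')
          obtain ⟨_, _, _, _, hsign⟩ := franklin hN h1' hsum' hexc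
          rw [heq] at hsign
          have hnz : ((-1 : ℤ)) ^ S.card ≠ 0 := pow_ne_zero _ (by norm_num)
          have : ((-1 : ℤ)) ^ S.card = 0 := by linarith
          exact hnz this
        · intro S hS
          obtain ⟨h1', hsum'⟩ := mem_D_iff.1 hS
          have hexc : ¬ Exc S := fun hE => hp (exc_sum_pent hE hsum')
          obtain ⟨ha, hb, _, _, _⟩ := franklin hN h1' hsum' hexc
          exact mem_D_iff.2 ⟨ha, hb⟩
        · intro S hS
          obtain ⟨h1', hsum'⟩ := mem_D_iff.1 hS
          have hexc : ¬ Exc S := fun hE => hp (exc_sum_pent hE hsum')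
          obtain ⟨_, _, _, hd, _⟩ := franklin hN h1' hsum' hexc
          exact hd
      rw [hzero]
      simp [Int.odd_iff]
end
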